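/- Let n ≥ 1, j ∈ ℕ and M, m ∈ ℝ. If Φ_{n,j+1}(x) ≤ M·Φ_{n,j}(x) for all x ∈ [0,1], then Φ_{n,j+2}(x) ≤ M·Φ_{n,j+1}(x) for all x ∈ [0,1]. Analogously, if Φ_{n,j+1}(x) ≥ m·Φ_{n,j}(x) for all x ∈ [0,1], then Φ_{n,j+2}(x) ≥ m·Φ_{n,j+1}(x) for all x ∈ [0,1]. In particular, the maxima M_{n,j} of Φ_{n,j+1}/Φ_{n,j} on [0,1] are nonincreasing in j, and the minima m_{n,j} are nondecreasing in j. -/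

import Mathlib

/-!
`Φ_{n,j} = Lʲ 1`, where `L f (x) = 2⁻ⁿ ∑ₖ Π_{n,c}((x+k)/2ⁿ) f((x+k)/2ⁿ)` is the
transfer operator of `x ↦ 2ⁿ x mod 1` with the nonnegative weight `Π_{n,c}`. Being linear
and positive, `L` turns `Φ_{n,j+1} ≤ M Φ_{n,j}` into `Φ_{n,j+2} ≤ M Φ_{n,j+1}`, and likewise
for lower bounds. For the statements about extrema, the `Φ_{n,j}` are continuous and positive
on `[0,1]`: every fibre `{(x+k)/2ⁿ}` contains a point where the weight does not vanish,
namely `1/2` when `x ∈ {0,1}` and `x/2ⁿ` otherwise.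
-/

open Real MeasureTheory Filter

noncomputable section

/-- The perturbing sequence: `c j = 1` if `n ∣ j`, else `0`. -/
def pert (n j : ℕ) : ℕ := if n ∣ j then 1 else 0

/-- The lacunary trigonometric product `Π_{r,γ}(α) = ∏_{j<r} |cos(2^j α π + γ_j π/2)|`. -/
def PiProd (r : ℕ) (γ : ℕ → ℕ) (α : ℝ) : ℝ :=
  ∏ j ∈ Finset.range r, |Real.cos (2 ^ j * α * π + γ j * π / 2)|

/-- The functions `Φ_{n,j}` defined recursively by `Φ_{n,0} = 1` and
`Φ_{n,j+1}(x) = 2^{-n} Σ_{k<2^n} Π_{n,c}((x+k)/2^n) · Φ_{n,j}((x+k)/2^n)`. -/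
def Phi (n : ℕ) : ℕ → ℝ → ℝ
  | 0, _ => 1
  | j + 1, x => ((2:ℝ) ^ n)⁻¹ * ∑ k ∈ Finset.range (2 ^ n),
      PiProd n (pert n) ((x + k) / 2 ^ n) * Phi n j ((x + k) / 2 ^ n)

theorem PiProd_nonneg (r : ℕ) (γ : ℕ → ℕ) (α : ℝ) : 0 ≤ PiProd r γ α :=
  Finset.prod_nonneg fun _ _ => abs_nonneg _

theorem continuous_PiProd (r : ℕ) (γ : ℕ → ℕ) : Continuous (PiProd r γ) := by
  unfold PiProd
  fun_prop

theorem pert_zero (n : ℕ) : pert n 0 = 1 := by simp [pert]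

theorem pert_of_pos_of_lt {n j : ℕ} (hj₀ : 0 < j) (hjn : j < n) : pert n j = 0 := by
  simp [pert, Nat.not_dvd_of_pos_of_lt hj₀ hjn]

theorem PiProd_pert_half (n : ℕ) : PiProd n (pert n) (1 / 2) = 1 := by
  refine Finset.prod_eq_one fun j hj => ?_
  rcases j with _ | i
  · rw [pert_zero, show (2:ℝ) ^ 0 * (1 / 2) * π + (1 : ℕ) * π / 2 = ((1 : ℤ) : ℝ) * π by
      push_cast; ring]
    exact abs_cos_int_mul_pi 1
  · rw [pert_of_pos_of_lt i.succ_pos (Finset.mem_range.1 hj),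
      show (2:ℝ) ^ (i + 1) * (1 / 2) * π + (0 : ℕ) * π / 2 = ((2 ^ i : ℕ) : ℤ) * π by
        push_cast; ring]
    exact abs_cos_int_mul_pi _

theorem PiProd_pert_pos {n : ℕ} {α : ℝ} (hα₀ : 0 < α) (hα : 2 ^ n * α < 1) :
    0 < PiProd n (pert n) α := by
  refine Finset.prod_pos fun j hj => abs_pos.2 ?_
  have hαj : (2:ℝ) ^ j * α < 1 / 2 := by
    have : (2:ℝ) ^ (j + 1) ≤ 2 ^ n := pow_le_pow_right₀ one_le_two (Finset.mem_range.1 hj)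
    rw [pow_succ] at this
    nlinarith
  rcases j with _ | i
  · rw [pert_zero, Nat.cast_one, one_mul, cos_add_pi_div_two, neg_ne_zero]
    refine (sin_pos_of_pos_of_lt_pi (by positivity) ?_).ne'
    rw [pow_zero, one_mul] at hαj
    nlinarith [pi_pos]
  · rw [pert_of_pos_of_lt i.succ_pos (Finset.mem_range.1 hj), Nat.cast_zero, zero_mul,
      zero_div, add_zero]
    have : 0 < 2 ^ (i + 1) * α * π := by positivity
    exact (cos_pos_of_mem_Ioo ⟨by linarith [pi_pos], by nlinarith [pi_pos]⟩).ne'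

theorem exists_PiProd_pert_pos {n : ℕ} (hn : 1 ≤ n) {x : ℝ} (hx : x ∈ Set.Icc (0:ℝ) 1) :
    ∃ k ∈ Finset.range (2 ^ n), 0 < PiProd n (pert n) ((x + k) / 2 ^ n) := by
  obtain ⟨i, rfl⟩ := Nat.exists_eq_add_of_le' hn
  have hlt : 2 ^ i < 2 ^ (i + 1) := Nat.pow_lt_pow_succ one_lt_two
  have at_half : ∀ k : ℕ, x + k = 2 ^ i →
      0 < PiProd (i + 1) (pert (i + 1)) ((x + k) / 2 ^ (i + 1)) := fun k hk => by
      rw [hk, pow_succ, div_mul_cancel_left₀ (by positivity), ← one_div, PiProd_pert_half]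
      exact one_pos
  rcases hx.1.eq_or_lt with rfl | hx₀
  · exact ⟨2 ^ i, Finset.mem_range.2 hlt, at_half _ (by push_cast; ring)⟩
  rcases hx.2.eq_or_lt with rfl | hx₁
  · refine ⟨2 ^ i - 1, Finset.mem_range.2 ((Nat.sub_le _ _).trans_lt hlt), at_half _ ?_⟩
    rw [Nat.cast_sub Nat.one_le_two_pow]
    push_cast
    ring
  · refine ⟨0, Finset.mem_range.2 (Nat.two_pow_pos _), PiProd_pert_pos (by positivity) ?_⟩
    rwa [Nat.cast_zero, add_zero, mul_div_cancel₀ _ (by positivity)]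

theorem add_div_two_pow_mem_Icc {n k : ℕ} (hk : k ∈ Finset.range (2 ^ n)) {x : ℝ}
    (hx : x ∈ Set.Icc (0:ℝ) 1) : (x + k) / 2 ^ n ∈ Set.Icc (0:ℝ) 1 := by
  have hk : (k : ℝ) + 1 ≤ 2 ^ n := by exact_mod_cast Finset.mem_range.1 hk
  constructor
  · exact div_nonneg (add_nonneg hx.1 k.cast_nonneg) (by positivity)
  · rw [div_le_one (by positivity)]
    linarith [hx.2]

def transferOperator (n : ℕ) (w f : ℝ → ℝ) (x : ℝ) : ℝ :=
  ((2:ℝ) ^ n)⁻¹ * ∑ k ∈ Finset.range (2 ^ n), w ((x + k) / 2 ^ n) * f ((x + k) / 2 ^ n)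

section transferOperator

variable {n : ℕ} {w f g : ℝ → ℝ} {x : ℝ}

theorem Continuous.transferOperator (hw : Continuous w) (hf : Continuous f) :
    Continuous (transferOperator n w f) := by
  unfold _root_.transferOperator
  fun_prop

theorem transferOperator_const_mul (c : ℝ) :
    transferOperator n w (fun y => c * f y) x = c * transferOperator n w f x := by
  simp only [transferOperator, Finset.mul_sum]
  exact Finset.sum_congr rfl fun _ _ => by ring

theorem transferOperator_mono (hw : ∀ y ∈ Set.Icc (0:ℝ) 1, 0 ≤ w y)
    (hfg : ∀ y ∈ Set.Icc (0:ℝ) 1, f y ≤ g y) (hx : x ∈ Set.Icc (0:ℝ) 1) :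
    transferOperator n w f x ≤ transferOperator n w g x := by
  refine mul_le_mul_of_nonneg_left (Finset.sum_le_sum fun k hk => ?_) (by positivity)
  have hy := add_div_two_pow_mem_Icc hk hx
  exact mul_le_mul_of_nonneg_left (hfg _ hy) (hw _ hy)

theorem transferOperator_pos (hw : ∀ y ∈ Set.Icc (0:ℝ) 1, 0 ≤ w y)
    (hf : ∀ y ∈ Set.Icc (0:ℝ) 1, 0 < f y) (hx : x ∈ Set.Icc (0:ℝ) 1)
    (hwx : ∃ k ∈ Finset.range (2 ^ n), 0 < w ((x + k) / 2 ^ n)) :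
    0 < transferOperator n w f x := by
  obtain ⟨k, hk, hwk⟩ := hwx
  refine mul_pos (by positivity) (Finset.sum_pos' (fun l hl => ?_) ⟨k, hk, ?_⟩)
  · have hy := add_div_two_pow_mem_Icc hl hx
    exact mul_nonneg (hw _ hy) (hf _ hy).le
  · exact mul_pos hwk (hf _ (add_div_two_pow_mem_Icc hk hx))

end transferOperator

theorem continuous_Phi (n i : ℕ) : Continuous (Phi n i) := by
  induction i with
  | zero => exact continuous_const
  | succ i ih => exact (continuous_PiProd n (pert n)).transferOperator ih

theorem Phi_pos {n : ℕ} (hn : 1 ≤ n) (i : ℕ) {x : ℝ} (hx : x ∈ Set.Icc (0:ℝ) 1) :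
    0 < Phi n i x := by
  induction i generalizing x with
  | zero => exact one_pos
  | succ i ih =>
    exact transferOperator_pos (fun y _ => PiProd_nonneg _ _ y) (fun y hy => ih hy) hx
      (exists_PiProd_pert_pos hn hx)

theorem Phi_succ_succ_le_mul {n j : ℕ} {M : ℝ}
    (h : ∀ x ∈ Set.Icc (0:ℝ) 1, Phi n (j + 1) x ≤ M * Phi n j x) :
    ∀ x ∈ Set.Icc (0:ℝ) 1, Phi n (j + 2) x ≤ M * Phi n (j + 1) x := fun x hx =>
  calc Phi n (j + 2) x = transferOperator n (PiProd n (pert n)) (Phi n (j + 1)) x := rfl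
    _ ≤ transferOperator n (PiProd n (pert n)) (fun y => M * Phi n j y) x :=
      transferOperator_mono (fun y _ => PiProd_nonneg _ _ y) h hx
    _ = M * Phi n (j + 1) x := transferOperator_const_mul M

theorem mul_le_Phi_succ_succ {n j : ℕ} {m : ℝ}
    (h : ∀ x ∈ Set.Icc (0:ℝ) 1, m * Phi n j x ≤ Phi n (j + 1) x) :
    ∀ x ∈ Set.Icc (0:ℝ) 1, m * Phi n (j + 1) x ≤ Phi n (j + 2) x := fun x hx =>
  calc m * Phi n (j + 1) x = transferOperator n (PiProd n (pert n)) (fun y => m * Phi n j y) x :=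
        (transferOperator_const_mul m).symm
    _ ≤ transferOperator n (PiProd n (pert n)) (Phi n (j + 1)) x :=
      transferOperator_mono (fun y _ => PiProd_nonneg _ _ y) h hx
    _ = Phi n (j + 2) x := rfl

section RatioBounds

variable {α : Type*} {K : Set α} {f g f' g' : α → ℝ}

theorem csSup_image_div_le_of_le_mul (hK : K.Nonempty) (hbdd : BddAbove ((fun x => f x / g x) '' K))
    (hg : ∀ x ∈ K, 0 < g x) (hg' : ∀ x ∈ K, 0 < g' x)
    (h : ∀ M, (∀ x ∈ K, f x ≤ M * g x) → ∀ x ∈ K, f' x ≤ M * g' x) :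
    sSup ((fun x => f' x / g' x) '' K) ≤ sSup ((fun x => f x / g x) '' K) := by
  refine csSup_le (hK.image _) ?_
  rintro _ ⟨x, hx, rfl⟩
  refine (div_le_iff₀ (hg' x hx)).2 (h _ (fun y hy => ?_) x hx)
  exact (div_le_iff₀ (hg y hy)).1 (le_csSup hbdd ⟨y, hy, rfl⟩)

theorem le_csInf_image_div_of_mul_le (hK : K.Nonempty) (hbdd : BddBelow ((fun x => f x / g x) '' K))
    (hg : ∀ x ∈ K, 0 < g x) (hg' : ∀ x ∈ K, 0 < g' x)
    (h : ∀ m, (∀ x ∈ K, m * g x ≤ f x) → ∀ x ∈ K, m * g' x ≤ f' x) :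
    sInf ((fun x => f x / g x) '' K) ≤ sInf ((fun x => f' x / g' x) '' K) := by
  refine le_csInf (hK.image _) ?_
  rintro _ ⟨x, hx, rfl⟩
  refine (le_div_iff₀ (hg' x hx)).2 (h _ (fun y hy => ?_) x hx)
  exact (le_div_iff₀ (hg y hy)).1 (csInf_le hbdd ⟨y, hy, rfl⟩)

end RatioBounds

theorem isCompact_image_Phi_ratio {n : ℕ} (hn : 1 ≤ n) (i : ℕ) :
    IsCompact ((fun x => Phi n (i + 1) x / Phi n i x) '' Set.Icc (0:ℝ) 1) :=
  isCompact_Icc.image_of_continuousOn <| (continuous_Phi n (i + 1)).continuousOn.div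
    (continuous_Phi n i).continuousOn fun _ hx => (Phi_pos hn i hx).ne'

/-- Monotonicity of the ratios `Φ_{n,j+1}/Φ_{n,j}`: an upper bound `M` (resp. a lower
bound `m`) for the ratio at level `j` persists at level `j+1`; in particular the maxima
`M_{n,j}` of `Φ_{n,j+1}/Φ_{n,j}` on `[0,1]` are nonincreasing in `j` and the minima
`m_{n,j}` are nondecreasing in `j`. -/
theorem Phi_ratio_monotone (n : ℕ) (hn : 1 ≤ n) (j : ℕ) (M m : ℝ) :
    ((∀ x ∈ Set.Icc (0:ℝ) 1, Phi n (j + 1) x ≤ M * Phi n j x) →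
      ∀ x ∈ Set.Icc (0:ℝ) 1, Phi n (j + 2) x ≤ M * Phi n (j + 1) x) ∧
    ((∀ x ∈ Set.Icc (0:ℝ) 1, m * Phi n j x ≤ Phi n (j + 1) x) →
      ∀ x ∈ Set.Icc (0:ℝ) 1, m * Phi n (j + 1) x ≤ Phi n (j + 2) x) ∧
    (∀ i : ℕ, sSup ((fun x => Phi n (i + 2) x / Phi n (i + 1) x) '' Set.Icc (0:ℝ) 1) ≤
      sSup ((fun x => Phi n (i + 1) x / Phi n i x) '' Set.Icc (0:ℝ) 1)) ∧
    (∀ i : ℕ, sInf ((fun x => Phi n (i + 1) x / Phi n i x) '' Set.Icc (0:ℝ) 1) ≤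
      sInf ((fun x => Phi n (i + 2) x / Phi n (i + 1) x) '' Set.Icc (0:ℝ) 1)) := by
  have hK : (Set.Icc (0:ℝ) 1).Nonempty := Set.nonempty_Icc.2 zero_le_one
  refine ⟨Phi_succ_succ_le_mul, mul_le_Phi_succ_succ, fun i => ?_, fun i => ?_⟩
  · exact csSup_image_div_le_of_le_mul hK (isCompact_image_Phi_ratio hn i).bddAbove
      (fun _ => Phi_pos hn i) (fun _ => Phi_pos hn (i + 1)) fun _ => Phi_succ_succ_le_mul
  · exact le_csInf_image_div_of_mul_le hK (isCompact_image_Phi_ratio hn i).bddBelow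
      (fun _ => Phi_pos hn i) (fun _ => Phi_pos hn (i + 1)) fun _ => mul_le_Phi_succ_succ

end
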